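/- arXiv:2311.07610 — 7 statements merged into one kernel-verified Lean document; each statement's English description precedes it below -/
import Mathlib

section
/- For every positive integer n and integer t, n·∑_{k=1}^{⌊n/2⌋} ((-1)^{k-1}/k)·C(n-k-1, k-1)·L_{n-2k+t} equals L_{n+t} - (-1)^n·2·L_t if n ≡ 0 (mod 5); equals L_{n+t} + (-1)^n·L_{t+1} if n ≡ 1 or 4 (mod 5); and equals L_{n+t} - (-1)^n·L_{t-1} if n ≡ 2 or 3 (mod 5). -/
/-!
Waring's formula: for every `x`, `n * ∑ (-1)^(k-1)/k * C(n-k-1, k-1) * x^(n-2k) = x^n - D_n(x)`,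
where `D_n = dickson 1 1 n` is the Dickson polynomial, `D_n(a + a⁻¹) = a^n + a^(-n)`; both sides
satisfy `D_{n+2} = x D_{n+1} - D_n`. If `x ^ 2 = x + 1` then `D_{n+5}(x) = -D_n(x)` (indeed
`D_n(φ) = 2 cos (nπ/5)`), so `(-1)^n D_n(x)` depends only on `n % 5`. Applying this at `x = φ` and
`x = ψ` and using `L_m = φ^m + ψ^m` gives the three cases.
-/

open Finset Real

/-- Fibonacci numbers extended to integer indices. -/
def fibZ (n : ℤ) : ℤ :=
  if 0 ≤ n then (Nat.fib n.toNat : ℤ)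
  else (-1) ^ ((-n).toNat + 1) * (Nat.fib (-n).toNat : ℤ)

/-- Lucas numbers on natural indices. -/
def lucasNat : ℕ → ℤ
  | 0 => 2
  | 1 => 1
  | n + 2 => lucasNat (n + 1) + lucasNat n

/-- Lucas numbers extended to integer indices. -/
def lucasZ (n : ℤ) : ℤ :=
  if 0 ≤ n then lucasNat n.toNat
  else (-1) ^ (-n).toNat * lucasNat (-n).toNat

noncomputable def gold : ℝ := (1 + Real.sqrt 5) / 2
noncomputable def gold' : ℝ := (1 - Real.sqrt 5) / 2

open Polynomial
open scoped goldenRatio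

theorem coe_lucasNat_eq : ∀ k : ℕ, (lucasNat k : ℝ) = φ ^ k + ψ ^ k
  | 0 => by norm_num [lucasNat]
  | 1 => by simp [lucasNat, goldenRatio_add_goldenConj]
  | k + 2 => by
    rw [lucasNat, Int.cast_add, coe_lucasNat_eq (k + 1), coe_lucasNat_eq k]
    linear_combination -(φ ^ k * goldenRatio_sq + ψ ^ k * goldenConj_sq)

theorem coe_lucasZ_eq (m : ℤ) : (lucasZ m : ℝ) = φ ^ m + ψ ^ m := by
  rcases le_or_gt 0 m with hm | hm
  · lift m to ℕ using hm
    simp [lucasZ, coe_lucasNat_eq]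
  · obtain ⟨j, rfl⟩ : ∃ j : ℕ, m = -j := ⟨(-m).toNat, by omega⟩
    simp only [lucasZ, if_neg (show ¬ (0 : ℤ) ≤ -j by omega), neg_neg, Int.toNat_natCast,
      Int.cast_mul, Int.cast_pow, Int.cast_neg, Int.cast_one, coe_lucasNat_eq,
      zpow_neg, zpow_natCast, ← inv_pow, inv_goldenRatio, inv_goldenConj]
    rw [neg_pow ψ, neg_pow φ]
    ring

section Dickson

variable {R : Type*} [CommRing R]

theorem dickson_one_one_eval_zero (x : R) : (dickson 1 1 0).eval x = 2 := by
  norm_num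

theorem dickson_one_one_eval_add_two (x : R) (n : ℕ) :
    (dickson 1 1 (n + 2)).eval x = x * (dickson 1 1 (n + 1)).eval x - (dickson 1 1 n).eval x := by
  simp [dickson_add_two]

variable {x : R}

theorem dickson_one_one_eval_add_five (hx : x ^ 2 = x + 1) (n : ℕ) :
    (dickson 1 1 (n + 5)).eval x = -(dickson 1 1 n).eval x := by
  -- `D_{n+5} = (x⁴ - 3x² + 1) D_{n+1} - (x³ - 2x) D_n`, and modulo `x² - x - 1` the two
  -- coefficients are `0` and `1`.
  simp only [dickson_one_one_eval_add_two]
  linear_combination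
    ((x ^ 2 + x - 1) * (dickson 1 1 (n + 1)).eval x - (x + 1) * (dickson 1 1 n).eval x) * hx

theorem dickson_one_one_eval_of_sq_eq_add_one (hx : x ^ 2 = x + 1) :
    ∀ n : ℕ, (dickson 1 1 n).eval x =
      (-1) ^ n * if n % 5 = 0 then 2 else if n % 5 = 1 ∨ n % 5 = 4 then -x else x - 1
  | 0 | 1 | 2 | 3 | 4 => by
    grind [dickson_one_one_eval_add_two, dickson_one_one_eval_zero, dickson_one, eval_X]
  | n + 5 => by
    rw [dickson_one_one_eval_add_five hx, dickson_one_one_eval_of_sq_eq_add_one hx n,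
      Nat.add_mod_right]
    ring

end Dickson

section Waring

variable {K : Type*} [Field K]

noncomputable def waringCoeff (n k : ℕ) : K :=
  (-1) ^ (k - 1) * n / k * (n - k - 1).choose (k - 1)

noncomputable def waringSum (n : ℕ) (x : K) : K :=
  ∑ k ∈ Icc 1 (n / 2), waringCoeff n k * x ^ (n - 2 * k)

theorem waringCoeff_one (n : ℕ) : (waringCoeff n 1 : K) = n := by
  simp [waringCoeff]

theorem waringCoeff_eq_zero {n k : ℕ} (hk : 2 ≤ k) (hn : n < 2 * k) :
    (waringCoeff n k : K) = 0 := by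
  simp [waringCoeff, Nat.choose_eq_zero_of_lt (show n - k - 1 < k - 1 by omega)]

theorem waringSum_eq_sum_range {n N : ℕ} (hn : 2 ≤ n) (hN : n / 2 ≤ N) (x : K) :
    waringSum n x = ∑ k ∈ range N, waringCoeff n (k + 1) * x ^ (n - 2 * (k + 1)) := by
  obtain ⟨d, rfl⟩ := Nat.exists_eq_add_of_le hN
  rw [sum_range_add, sum_eq_zero (s := range d), add_zero, waringSum, range_eq_Ico,
    sum_Ico_add' (fun k => waringCoeff n k * x ^ (n - 2 * k)) 0 (n / 2) 1]
  · rfl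
  · exact fun i _ => by rw [waringCoeff_eq_zero (by omega) (by omega), zero_mul]

variable [CharZero K]

theorem waringCoeff_add_four (m k : ℕ) :
    (waringCoeff (m + 2 * k + 4) (k + 2) : K) =
      waringCoeff (m + 2 * k + 3) (k + 2) - waringCoeff (m + 2 * k + 2) (k + 1) := by
  have habsorb : ((m + k).choose (k + 1) : K) * (k + 1) = (m + k).choose k * m := by
    have h := Nat.choose_succ_right_eq (m + k) k
    rw [Nat.add_sub_cancel] at h
    exact_mod_cast h
  have hk1 : (k : K) + 1 ≠ 0 := by exact_mod_cast Nat.succ_ne_zero k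
  have hk2 : (k : K) + 2 ≠ 0 := by exact_mod_cast Nat.succ_ne_zero (k + 1)
  simp only [waringCoeff, show m + 2 * k + 4 - (k + 2) - 1 = m + k + 1 by omega,
    show m + 2 * k + 3 - (k + 2) - 1 = m + k by omega,
    show m + 2 * k + 2 - (k + 1) - 1 = m + k by omega, Nat.add_sub_cancel,
    show k + 2 - 1 = k + 1 from rfl, Nat.choose_succ_succ', pow_succ]
  push_cast
  field_simp
  linear_combination -habsorb

-- False for `n = 1`: truncated subtraction gives `waringCoeff 1 1 = 1`.
theorem waringCoeff_add_two {n : ℕ} (hn : 2 ≤ n) (k : ℕ) :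
    (waringCoeff (n + 2) (k + 2) : K) = waringCoeff (n + 1) (k + 2) - waringCoeff n (k + 1) := by
  by_cases hkn : 2 * k + 2 ≤ n
  · obtain ⟨m, rfl⟩ := Nat.exists_eq_add_of_le' hkn
    exact waringCoeff_add_four m k
  · rw [waringCoeff_eq_zero (n := n + 2) (by omega) (by omega),
      waringCoeff_eq_zero (n := n + 1) (by omega) (by omega),
      waringCoeff_eq_zero (n := n) (by omega) (by omega), sub_zero]

theorem waringSum_add_two {n : ℕ} (hn : 2 ≤ n) (x : K) :
    waringSum (n + 2) x = x * waringSum (n + 1) x - waringSum n x + x ^ n := by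
  have hterm (k : ℕ) : waringCoeff (n + 2) (k + 1 + 1) * x ^ (n + 2 - 2 * (k + 1 + 1)) =
      x * (waringCoeff (n + 1) (k + 1 + 1) * x ^ (n + 1 - 2 * (k + 1 + 1))) -
        waringCoeff n (k + 1) * x ^ (n - 2 * (k + 1)) := by
    rw [waringCoeff_add_two hn, sub_mul, show n + 2 - 2 * (k + 1 + 1) = n - 2 * (k + 1) by omega]
    by_cases hk : 2 * (k + 2) ≤ n + 1
    · rw [show n - 2 * (k + 1) = n + 1 - 2 * (k + 1 + 1) + 1 by omega, pow_succ]
      ring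
    · rw [waringCoeff_eq_zero (n := n + 1) (by omega) (by omega)]
      ring
  have hfirst : waringCoeff (n + 2) (0 + 1) * x ^ (n + 2 - 2 * (0 + 1)) =
      x * (waringCoeff (n + 1) (0 + 1) * x ^ (n + 1 - 2 * (0 + 1))) + x ^ n := by
    obtain ⟨m, rfl⟩ := Nat.exists_eq_add_of_le' (show 1 ≤ n by omega)
    rw [waringCoeff_one, waringCoeff_one, show m + 1 + 2 - 2 * (0 + 1) = m + 1 by omega,
      show m + 1 + 1 - 2 * (0 + 1) = m by omega]
    push_cast
    ring
  rw [waringSum_eq_sum_range (n := n + 2) (N := n / 2 + 1) (by omega) (by omega),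
    waringSum_eq_sum_range (n := n + 1) (N := n / 2 + 1) (by omega) (by omega),
    waringSum_eq_sum_range (n := n) (N := n / 2) hn le_rfl, sum_range_succ', sum_range_succ',
    mul_add x, mul_sum, sum_congr rfl fun k _ => hterm k, sum_sub_distrib, hfirst]
  ring

theorem dickson_one_one_eval_eq_pow_sub_waringSum (x : K) :
    ∀ n, 1 ≤ n → (dickson 1 1 n).eval x = x ^ n - waringSum n x
  | 1, _ => by simp [waringSum]
  | 2, _ => by
    norm_num [waringSum, waringCoeff, dickson_one_one_eval_add_two, sq]
  | 3, _ => by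
    norm_num [waringSum, waringCoeff, dickson_one_one_eval_add_two]
    ring
  | n + 4, _ => by
    rw [dickson_one_one_eval_add_two,
      dickson_one_one_eval_eq_pow_sub_waringSum x (n + 3) (by omega),
      dickson_one_one_eval_eq_pow_sub_waringSum x (n + 2) (by omega),
      waringSum_add_two (n := n + 2) (by omega)]
    ring

end Waring

theorem stmt2 (n : ℕ) (hn : 0 < n) (t : ℤ) :
    (n : ℝ) * ∑ k ∈ Finset.Icc 1 (n / 2),
        (-1 : ℝ) ^ (k - 1) / k * (Nat.choose (n - k - 1) (k - 1) : ℝ) *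
          (lucasZ ((n : ℤ) - 2 * k + t) : ℝ) =
      if n % 5 = 0 then (lucasZ ((n : ℤ) + t) : ℝ) - (-1 : ℝ) ^ n * 2 * (lucasZ t : ℝ)
      else if n % 5 = 1 ∨ n % 5 = 4 then
        (lucasZ ((n : ℤ) + t) : ℝ) + (-1 : ℝ) ^ n * (lucasZ (t + 1) : ℝ)
      else (lucasZ ((n : ℤ) + t) : ℝ) - (-1 : ℝ) ^ n * (lucasZ (t - 1) : ℝ) := by
  have hbinet : (n : ℝ) * ∑ k ∈ Icc 1 (n / 2),
      (-1 : ℝ) ^ (k - 1) / k * (n - k - 1).choose (k - 1) * (lucasZ ((n : ℤ) - 2 * k + t) : ℝ) =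
        φ ^ t * waringSum n φ + ψ ^ t * waringSum n ψ := by
    simp only [waringSum, mul_sum, ← sum_add_distrib]
    refine sum_congr rfl fun k hk => ?_
    have h2k : 2 * k ≤ n := by rw [mem_Icc] at hk; omega
    rw [show (n : ℤ) - 2 * k + t = ((n - 2 * k : ℕ) : ℤ) + t by push_cast [h2k]; ring,
      coe_lucasZ_eq, zpow_add₀ goldenRatio_ne_zero, zpow_add₀ goldenConj_ne_zero,
      zpow_natCast, zpow_natCast, waringCoeff]
    ring
  have hwaring {x : ℝ} (hx : x ^ 2 = x + 1) : waringSum n x = x ^ n - (-1) ^ n *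
      if n % 5 = 0 then 2 else if n % 5 = 1 ∨ n % 5 = 4 then -x else x - 1 := by
    rw [← dickson_one_one_eval_of_sq_eq_add_one hx,
      dickson_one_one_eval_eq_pow_sub_waringSum x n hn]
    ring
  rw [hbinet, hwaring goldenRatio_sq, hwaring goldenConj_sq]
  simp only [coe_lucasZ_eq, zpow_add₀ goldenRatio_ne_zero, zpow_add₀ goldenConj_ne_zero, zpow_one,
    zpow_sub_one₀ goldenRatio_ne_zero, zpow_sub_one₀ goldenConj_ne_zero, zpow_natCast,
    inv_goldenRatio, inv_goldenConj]
  split_ifs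
  · ring
  · ring
  · linear_combination (-1 : ℝ) ^ n * (φ ^ t + ψ ^ t) * goldenRatio_add_goldenConj
end

section
/- For every positive integer n and integer t, n·∑_{k=1}^{⌊n/2⌋} ((-1)^{k-1}/k)·C(n-k-1, k-1)·F_{n-2k+t} equals F_{n+t} - (-1)^n·2·F_t if n ≡ 0 (mod 5); equals F_{n+t} + (-1)^n·F_{t+1} if n ≡ 1 or 4 (mod 5); and equals F_{n+t} - (-1)^n·F_{t-1} if n ≡ 2 or 3 (mod 5). -/
open Finset Real

/-!
Write `C n` for the Vieta–Lucas polynomials (`C n (y + y⁻¹) = yⁿ + y⁻ⁿ`) and `S n` for the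
rescaled Chebyshev polynomials of the second kind. Since `C n = S n - S (n - 2)` and `S n` has the
classical expansion `∑ (-1)ᵏ C(n-k, k) x^(n-2k)`, the numbers `n/k · C(n-k-1, k-1)` are the
coefficients of `C n`, so the theorem's sum with `F_m` replaced by `x^m` equals `xⁿ - C n x`.
By Binet's formula it remains to evaluate `C n` at the roots `φ = 2 cos (π/5)` and
`ψ = 2 cos (3π/5)` of `x² = x + 1`: there `C (n + 5) x = -C n x`, and the values
`2, -x, x - 1 = x⁻¹` produce `2 F_t`, `-F_(t+1)` and `F_(t-1)`.
-/

open Polynomial goldenRatio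

theorem Nat.add_add_two_mul_choose (m j : ℕ) :
    (m + j + 2) * m.choose j = (j + 1) * ((m + 1).choose (j + 1) + m.choose j) := by
  linear_combination Nat.add_one_mul_choose_eq m j

theorem Finset.sum_Icc_one_eq_sum_range {M : Type*} [AddCommMonoid M] (f : ℕ → M) (n : ℕ) :
    ∑ k ∈ Icc 1 n, f k = ∑ k ∈ range n, f (k + 1) := by
  rw [← Ico_add_one_right_eq_Icc, sum_Ico_eq_sum_range, add_tsub_cancel_right]
  simp only [add_comm]

namespace Polynomial.Chebyshev

theorem C_eq_S_sub_S (R : Type*) [CommRing R] (n : ℤ) : C R n = S R n - S R (n - 2) := by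
  linear_combination C_eq_S_sub_X_mul_S R n + S_eq R n

theorem C_eval_of_sq_eq_add_one {R : Type*} [CommRing R] {x : R} (hx : x ^ 2 = x + 1) (n : ℕ) :
    (C R n).eval x =
      (-1) ^ n * if n % 5 = 0 then 2 else if n % 5 = 1 ∨ n % 5 = 4 then -x else x - 1 := by
  induction n using Nat.twoStepInduction with
  | zero => simp
  | one => simp
  | more n ih₀ ih₁ =>
    have hC : C R ((n + 2 : ℕ) : ℤ) = X * C R ((n + 1 : ℕ) : ℤ) - C R (n : ℤ) := by
      push_cast; exact C_add_two R n
    rw [hC, eval_sub, eval_mul, eval_X, ih₀, ih₁, pow_succ, pow_succ]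
    have h5 := Nat.mod_lt n (show 0 < 5 by norm_num)
    rw [Nat.add_mod n 2, Nat.add_mod n 1]
    interval_cases n % 5 <;> grind

variable {K : Type*} [Field K]

theorem S_sub_one_eval_eq_sum {x : K} (hx : x ≠ 0) (n : ℕ) :
    (S K ((n : ℤ) - 1)).eval x =
      ∑ k ∈ range n, (-1) ^ k * ((n - 1 - k).choose k : K) * x ^ ((n : ℤ) - 1 - 2 * k) := by
  induction n using Nat.twoStepInduction with
  | zero => simp
  | one => simp
  | more n ih₀ ih₁ =>
    have hS : S K (((n + 2 : ℕ) : ℤ) - 1) =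
        X * S K (((n + 1 : ℕ) : ℤ) - 1) - S K ((n : ℤ) - 1) := by
      rw [show ((n + 2 : ℕ) : ℤ) - 1 = n + 1 by push_cast; ring,
        show ((n + 1 : ℕ) : ℤ) - 1 = n by push_cast; ring, S_add_one]
    have hterm : ∀ k ∈ range n,
        (-1) ^ (k + 1) * ((n + 2 - 1 - (k + 1)).choose (k + 1) : K) *
            x ^ (((n + 2 : ℕ) : ℤ) - 1 - 2 * (k + 1 : ℕ)) =
          x * ((-1) ^ (k + 1) * ((n + 1 - 1 - (k + 1)).choose (k + 1) : K) *
            x ^ (((n + 1 : ℕ) : ℤ) - 1 - 2 * (k + 1 : ℕ))) -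
          (-1) ^ k * ((n - 1 - k).choose k : K) * x ^ ((n : ℤ) - 1 - 2 * k) := by
      intro k hk
      obtain ⟨m, rfl⟩ : ∃ m, n = k + 1 + m := ⟨n - (k + 1), by simp at hk; omega⟩
      rw [show k + 1 + m + 2 - 1 - (k + 1) = m + 1 by omega,
        show k + 1 + m + 1 - 1 - (k + 1) = m by omega,
        show k + 1 + m - 1 - k = m by omega, Nat.choose_succ_succ',
        show (((k + 1 + m + 2 : ℕ) : ℤ) - 1 - 2 * (k + 1 : ℕ)) = ((m : ℤ) - k - 1) + 1 by
          push_cast; ring,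
        show (((k + 1 + m + 1 : ℕ) : ℤ) - 1 - 2 * (k + 1 : ℕ)) = (m : ℤ) - k - 1 by push_cast; ring,
        show (((k + 1 + m : ℕ) : ℤ) - 1 - 2 * k) = ((m : ℤ) - k - 1) + 1 by push_cast; ring,
        zpow_add_one₀ hx]
      push_cast
      ring
    rw [hS, eval_sub, eval_mul, eval_X, ih₀, ih₁, sum_range_succ' _ (n + 1), mul_sum,
      sum_range_succ' _ n, sum_range_succ _ n, sum_congr rfl hterm, sum_sub_distrib,
      show n + 2 - 1 - (n + 1) = 0 by omega, Nat.choose_zero_succ,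
      show ((n + 2 : ℕ) : ℤ) - 1 - 2 * (0 : ℕ) = (n + 1 : ℕ) by push_cast; ring,
      show ((n + 1 : ℕ) : ℤ) - 1 - 2 * (0 : ℕ) = n by push_cast; ring, zpow_natCast, zpow_natCast]
    simp only [pow_zero, Nat.choose_zero_right, Nat.cast_one, Nat.cast_zero, one_mul, mul_zero,
      zero_mul, add_zero, pow_succ]
    ring

theorem S_sub_one_eval_eq_sum_range {x : K} (hx : x ≠ 0) {n N : ℕ} (hN : N ≤ n) (hn : n ≤ 2 * N) :
    (S K ((n : ℤ) - 1)).eval x =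
      ∑ k ∈ range N, (-1) ^ k * ((n - 1 - k).choose k : K) * x ^ ((n : ℤ) - 1 - 2 * k) := by
  rw [S_sub_one_eval_eq_sum hx]
  refine (sum_subset (range_subset_range.2 hN) fun k hk hkN => ?_).symm
  simp only [mem_range, not_lt] at hk hkN
  rw [Nat.choose_eq_zero_of_lt (by omega), Nat.cast_zero, mul_zero, zero_mul]

theorem natCast_mul_sum_eq_pow_sub_C_eval [CharZero K] {x : K} (hx : x ≠ 0) {n : ℕ}
    (hn : 0 < n) :
    (n : K) * ∑ k ∈ Icc 1 (n / 2),
        (-1) ^ (k - 1) / k * ((n - k - 1).choose (k - 1) : K) * x ^ ((n : ℤ) - 2 * k) =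
      x ^ n - (C K n).eval x := by
  obtain ⟨m, rfl⟩ : ∃ m, n = m + 1 := ⟨n - 1, by omega⟩
  have hC : C K ((m + 1 : ℕ) : ℤ) = S K ((m + 2 : ℕ) - 1 : ℤ) - S K ((m : ℕ) - 1 : ℤ) := by
    rw [C_eq_S_sub_S]; congr 2 <;> push_cast <;> ring
  have hterm : ∀ j ∈ range ((m + 1) / 2),
      (m + 1 : ℕ) * ((-1) ^ (j + 1 - 1) / (j + 1 : ℕ) *
        ((m + 1 - (j + 1) - 1).choose (j + 1 - 1) : K) *
          x ^ (((m + 1 : ℕ) : ℤ) - 2 * (j + 1 : ℕ))) =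
      -((-1) ^ (j + 1) * ((m + 2 - 1 - (j + 1)).choose (j + 1) : K) *
        x ^ (((m + 2 : ℕ) : ℤ) - 1 - 2 * (j + 1 : ℕ))) +
      (-1) ^ j * ((m - 1 - j).choose j : K) * x ^ ((m : ℤ) - 1 - 2 * j) := by
    intro j hj
    obtain ⟨p, rfl⟩ : ∃ p, m = p + j + 1 := ⟨m - j - 1, by simp at hj; omega⟩
    have hchoose : ((p + j + 1 + 1 : ℕ) : K) * (p.choose j : K) =
        (j + 1 : ℕ) * ((p + 1).choose (j + 1) + p.choose j : ℕ) := by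
      exact_mod_cast Nat.add_add_two_mul_choose p j
    rw [show p + j + 1 + 1 - (j + 1) - 1 = p by omega, show j + 1 - 1 = j by omega,
      show p + j + 1 + 2 - 1 - (j + 1) = p + 1 by omega, show p + j + 1 - 1 - j = p by omega,
      show ((p + j + 1 + 1 : ℕ) : ℤ) - 2 * (j + 1 : ℕ) = (p : ℤ) - j by push_cast; ring,
      show ((p + j + 1 + 2 : ℕ) : ℤ) - 1 - 2 * (j + 1 : ℕ) = (p : ℤ) - j by push_cast; ring,
      show ((p + j + 1 : ℕ) : ℤ) - 1 - 2 * (j : ℕ) = (p : ℤ) - j by push_cast; ring]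
    have hj : ((j + 1 : ℕ) : K) ≠ 0 := Nat.cast_ne_zero.2 j.succ_ne_zero
    push_cast at hchoose hj ⊢
    field_simp
    linear_combination (-1) ^ j * hchoose
  rw [hC, eval_sub, S_sub_one_eval_eq_sum_range hx (N := (m + 1) / 2 + 1) (by omega) (by omega),
    S_sub_one_eval_eq_sum_range hx (N := (m + 1) / 2) (by omega) (by omega),
    sum_Icc_one_eq_sum_range, mul_sum, sum_congr rfl hterm, sum_add_distrib, sum_neg_distrib,
    sum_range_succ', show ((m + 2 : ℕ) : ℤ) - 1 - 2 * (0 : ℕ) = (m + 1 : ℕ) by push_cast; ring,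
    zpow_natCast]
  simp only [pow_zero, Nat.choose_zero_right, Nat.cast_one, one_mul]
  ring

end Polynomial.Chebyshev

theorem fibZ_eq_goldenRatio_zpow (m : ℤ) : (fibZ m : ℝ) = (φ ^ m - ψ ^ m) / √5 := by
  rcases m with k | k
  · simp [fibZ, coe_fib_eq]
  · have hk : (-Int.negSucc k).toNat = k + 1 := by omega
    rw [fibZ, if_neg (Int.negSucc_lt_zero k).not_ge, hk, zpow_negSucc, zpow_negSucc, ← inv_pow,
      ← inv_pow, inv_goldenRatio, inv_goldenConj]
    push_cast
    rw [coe_fib_eq, neg_pow ψ, neg_pow φ]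
    ring

theorem stmt3 (n : ℕ) (hn : 0 < n) (t : ℤ) :
    (n : ℝ) * ∑ k ∈ Finset.Icc 1 (n / 2),
        (-1 : ℝ) ^ (k - 1) / k * (Nat.choose (n - k - 1) (k - 1) : ℝ) *
          (fibZ ((n : ℤ) - 2 * k + t) : ℝ) =
      if n % 5 = 0 then (fibZ ((n : ℤ) + t) : ℝ) - (-1 : ℝ) ^ n * 2 * (fibZ t : ℝ)
      else if n % 5 = 1 ∨ n % 5 = 4 then
        (fibZ ((n : ℤ) + t) : ℝ) + (-1 : ℝ) ^ n * (fibZ (t + 1) : ℝ)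
      else (fibZ ((n : ℤ) + t) : ℝ) - (-1 : ℝ) ^ n * (fibZ (t - 1) : ℝ) := by
  set a : ℝ → ℕ → ℝ := fun x k =>
    (-1) ^ (k - 1) / k * ((n - k - 1).choose (k - 1) : ℝ) * x ^ ((n : ℤ) - 2 * k)
  have hsplit : ∀ k ∈ Icc 1 (n / 2),
      (-1 : ℝ) ^ (k - 1) / k * (Nat.choose (n - k - 1) (k - 1) : ℝ) *
        (fibZ ((n : ℤ) - 2 * k + t) : ℝ) = φ ^ t / √5 * a φ k - ψ ^ t / √5 * a ψ k :=
    fun k _ => by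
    rw [fibZ_eq_goldenRatio_zpow, zpow_add₀ goldenRatio_ne_zero, zpow_add₀ goldenConj_ne_zero]
    ring
  rw [sum_congr rfl hsplit, sum_sub_distrib, ← mul_sum, ← mul_sum, mul_sub, mul_left_comm,
    mul_left_comm (n : ℝ), Chebyshev.natCast_mul_sum_eq_pow_sub_C_eval goldenRatio_ne_zero hn,
    Chebyshev.natCast_mul_sum_eq_pow_sub_C_eval goldenConj_ne_zero hn,
    Chebyshev.C_eval_of_sq_eq_add_one goldenRatio_sq,
    Chebyshev.C_eval_of_sq_eq_add_one goldenConj_sq]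
  have hφ : φ - 1 = φ⁻¹ := by rw [inv_goldenRatio, ← one_sub_goldenConj]; ring
  have hψ : ψ - 1 = ψ⁻¹ := by rw [inv_goldenConj, ← one_sub_goldenRatio]; ring
  simp only [fibZ_eq_goldenRatio_zpow, zpow_add₀ goldenRatio_ne_zero, zpow_add₀ goldenConj_ne_zero,
    zpow_natCast, zpow_one, zpow_sub_one₀ goldenRatio_ne_zero, zpow_sub_one₀ goldenConj_ne_zero,
    hφ, hψ]
  split_ifs <;> ring
end

section
/- For every positive integer n, n·∑_{k=1}^{⌊n/2⌋} ((-1)^{k-1}/k)·C(n-k-1, k-1)·F_{2k} equals -2·F_n if n ≡ 0 (mod 5); equals -F_{n-1} if n ≡ 1 or 4 (mod 5); and equals F_{n+1} if n ≡ 2 or 3 (mod 5). -/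
/-!
Since `n * C(n-k-1, k-1) = k * (C(n-k, k) + C(n-k-1, k-1))`, the left side is
`-∑ₖ (C(n-k, k) + C(n-k-1, k-1)) (-1)^k F_{2k}`, and Binet's formula turns this into values
of the Lucas polynomial `L_n(z) = ∑ₖ (C(n-k, k) + C(n-k-1, k-1)) z^k` at `z = -φ²`
and `z = -ψ²`.
The Lucas polynomials satisfy `L_{n+2} = L_{n+1} + z L_n`; for `r² = r + 1` the roots of
`t² - t + r²` are `r` times primitive fifth roots of unity, so `L_n(-r²)` is `r^n` times a
coefficient depending only on `n mod 5`. Binet's formula then reads off the three cases.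
-/

open Finset Real

section CommRing

variable {R : Type*} [CommRing R]

def fibSum (z : R) (m : ℕ) : R :=
  ∑ p ∈ antidiagonal m, (p.2.choose p.1 : R) * z ^ p.1

theorem fibSum_add_two (z : R) (m : ℕ) :
    fibSum z (m + 2) = fibSum z (m + 1) + z * fibSum z m := by
  rw [fibSum, Nat.sum_antidiagonal_succ, Nat.sum_antidiagonal_succ', fibSum,
    Nat.sum_antidiagonal_succ, fibSum, mul_comm z, sum_mul]
  simp only [Nat.choose_succ_succ', Nat.choose_zero_succ, Nat.choose_zero_right, Nat.cast_add,
    add_mul, sum_add_distrib, Nat.cast_zero, zero_mul, zero_add, pow_succ, ← mul_assoc]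
  ring

theorem fibSum_eq_sum_range (z : R) (m : ℕ) :
    fibSum z m = ∑ k ∈ range (m + 1), ((m - k).choose k : R) * z ^ k :=
  Nat.sum_antidiagonal_eq_sum_range_succ (fun i j => (j.choose i : R) * z ^ i) m

theorem fibSum_zero (z : R) : fibSum z 0 = 1 := by simp [fibSum]

theorem fibSum_one (z : R) : fibSum z 1 = 1 := by simp [fibSum, Nat.sum_antidiagonal_succ]

/-- For `r = φ` this is `-2 cos (2πn/5)`. -/
def coeffMod5 (r : R) (n : ℕ) : R :=
  if n % 5 = 0 then -2 else if n % 5 = 1 ∨ n % 5 = 4 then 1 - r else r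

theorem pow_mul_coeffMod5_add_two {r : R} (hr : r ^ 2 = r + 1) (n : ℕ) :
    r ^ (n + 2) * coeffMod5 r (n + 2) =
      r ^ (n + 1) * coeffMod5 r (n + 1) - r ^ 2 * (r ^ n * coeffMod5 r n) := by
  suffices h : r ^ 2 * coeffMod5 r (n + 2) = r * coeffMod5 r (n + 1) - r ^ 2 * coeffMod5 r n by
    linear_combination r ^ n * h
  have h5 : n % 5 < 5 := Nat.mod_lt n (by norm_num)
  simp only [coeffMod5, Nat.add_mod n]
  interval_cases n % 5 <;> norm_num
  · linear_combination r * hr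
  · ring
  · ring
  · linear_combination r * hr
  · linear_combination -2 * r * hr

theorem fibSum_add_two_add_mul_fibSum_neg_sq {r : R} (hr : r ^ 2 = r + 1) (m : ℕ) :
    fibSum (-r ^ 2) (m + 2) + -r ^ 2 * fibSum (-r ^ 2) m =
      -(r ^ (m + 2) * coeffMod5 r (m + 2)) := by
  induction m using Nat.twoStepInduction with
  | zero =>
    have h2 : coeffMod5 r 2 = r := by simp [coeffMod5]
    rw [fibSum_add_two, fibSum_one, fibSum_zero, h2]
    linear_combination (r - 1) * hr
  | one =>
    have h3 : coeffMod5 r 3 = r := by simp [coeffMod5]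
    rw [fibSum_add_two, fibSum_add_two, fibSum_one, fibSum_zero, h3]
    linear_combination (r ^ 2 + r - 1) * hr
  | more m ih₀ ih₁ =>
    have := pow_mul_coeffMod5_add_two hr (m + 2)
    simp only [add_assoc, Nat.reduceAdd] at this ih₁ ⊢
    rw [fibSum_add_two _ (m + 2)]
    linear_combination ih₁ - r ^ 2 * ih₀ + this - r ^ 2 * fibSum_add_two (-r ^ 2) m

/-- The right side is `L_{m+2}(z) - 1`: the constant term of `L_{m+2}` is missing on the left. -/
theorem sum_Icc_choose_add_choose_mul_pow (z : R) (m : ℕ) :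
    ∑ k ∈ Icc 1 ((m + 2) / 2),
        (((m + 2 - k).choose k + (m + 2 - k - 1).choose (k - 1) : ℕ) : R) * z ^ k =
      fibSum z (m + 2) + z * fibSum z m - 1 := by
  rw [← Ico_add_one_right_eq_Icc, sum_Ico_eq_sum_range, Nat.add_sub_cancel]
  calc _ = ∑ j ∈ range ((m + 2) / 2),
          ((m + 1 - j).choose (j + 1) * z ^ (j + 1) + (m - j).choose j * z ^ (j + 1) : R) :=
        sum_congr rfl fun j _ => by
          rw [show m + 2 - (1 + j) = m + 1 - j by omega, show m + 1 - j - 1 = m - j by omega,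
            add_comm 1 j, Nat.add_sub_cancel, Nat.cast_add, add_mul]
    _ = ∑ j ∈ range (m + 2),
          ((m + 1 - j).choose (j + 1) * z ^ (j + 1) + (m - j).choose j * z ^ (j + 1) : R) := by
        refine sum_subset (range_subset_range.2 (by omega)) fun j hj hj' => ?_
        simp only [mem_range, not_lt] at hj hj'
        rw [Nat.choose_eq_zero_of_lt (by omega), Nat.choose_eq_zero_of_lt (by omega)]
        simp
    _ = fibSum z (m + 2) + z * fibSum z m - 1 := by
        have h₁ : ∑ j ∈ range (m + 2), ((m + 1 - j).choose (j + 1) * z ^ (j + 1) : R) =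
            fibSum z (m + 2) - 1 := by
          rw [fibSum_eq_sum_range, sum_range_succ' _ (m + 2)]
          simp
        have h₂ :
            ∑ j ∈ range (m + 2), ((m - j).choose j * z ^ (j + 1) : R) = z * fibSum z m := by
          rw [fibSum_eq_sum_range, mul_sum, sum_range_succ, Nat.choose_eq_zero_of_lt (by omega)]
          simp only [Nat.cast_zero, zero_mul, add_zero]
          exact sum_congr rfl fun j _ => by ring
        rw [sum_add_distrib, h₁, h₂]
        ring

end CommRing

theorem Nat.mul_choose_sub_sub_one {n k : ℕ} (hk : 0 < k) (hkn : k < n) :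
    n * (n - k - 1).choose (k - 1) = k * ((n - k).choose k + (n - k - 1).choose (k - 1)) := by
  obtain ⟨j, rfl⟩ := Nat.exists_eq_add_of_lt hkn
  have h := Nat.add_one_mul_choose_eq j (k - 1)
  rw [Nat.sub_add_cancel hk] at h
  rw [show k + j + 1 - k - 1 = j by omega, show k + j + 1 - k = j + 1 by omega]
  linarith

theorem cast_mul_neg_one_pow_div_mul_choose {n k : ℕ} (hk : 0 < k) (hkn : k < n) :
    (n : ℝ) * ((-1) ^ (k - 1) / k * (n - k - 1).choose (k - 1)) =
      -(((n - k).choose k + (n - k - 1).choose (k - 1) : ℕ) * (-1) ^ k) := by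
  have h : (n : ℝ) * ((n - k - 1).choose (k - 1) : ℕ) =
      k * (((n - k).choose k + (n - k - 1).choose (k - 1) : ℕ) : ℝ) := by
    exact_mod_cast Nat.mul_choose_sub_sub_one hk hkn
  obtain ⟨j, rfl⟩ := Nat.exists_eq_add_of_le' hk
  rw [Nat.add_sub_cancel, pow_succ] at *
  field_simp
  linear_combination h

section GoldenRatio

open scoped goldenRatio

theorem sum_mul_neg_one_pow_mul_fib_two_mul (s : Finset ℕ) (a : ℕ → ℝ) :
    ∑ k ∈ s, a k * (-1) ^ k * Nat.fib (2 * k) =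
      (∑ k ∈ s, a k * (-φ ^ 2) ^ k - ∑ k ∈ s, a k * (-ψ ^ 2) ^ k) / √5 := by
  rw [← sum_sub_distrib, sum_div]
  refine sum_congr rfl fun k _ => ?_
  rw [coe_fib_eq, neg_pow (φ ^ 2), neg_pow (ψ ^ 2), ← pow_mul, ← pow_mul]
  ring

theorem goldenRatio_pow_mul_coeffMod5_sub (n : ℕ) :
    (φ ^ n * coeffMod5 φ n - ψ ^ n * coeffMod5 ψ n) / √5 =
      if n % 5 = 0 then -2 * (Nat.fib n : ℝ)
      else if n % 5 = 1 ∨ n % 5 = 4 then -(Nat.fib (n - 1) : ℝ)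
      else (Nat.fib (n + 1) : ℝ) := by
  unfold coeffMod5
  split_ifs with h₀ h₁
  · rw [coe_fib_eq]
    ring
  · obtain ⟨k, rfl⟩ : ∃ k, n = k + 1 := ⟨n - 1, by omega⟩
    have h : (Nat.fib k : ℝ) = Nat.fib (k + 2) - Nat.fib (k + 1) := by
      rw [Nat.fib_add_two]
      push_cast
      ring
    rw [Nat.add_sub_cancel, h, coe_fib_eq, coe_fib_eq]
    ring
  · rw [coe_fib_eq]
    ring

end GoldenRatio

theorem stmt4 (n : ℕ) (hn : 0 < n) :
    (n : ℝ) * ∑ k ∈ Finset.Icc 1 (n / 2),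
        (-1 : ℝ) ^ (k - 1) / k * (Nat.choose (n - k - 1) (k - 1) : ℝ) * (Nat.fib (2 * k) : ℝ) =
      if n % 5 = 0 then -2 * (Nat.fib n : ℝ)
      else if n % 5 = 1 ∨ n % 5 = 4 then -(Nat.fib (n - 1) : ℝ)
      else (Nat.fib (n + 1) : ℝ) := by
  rcases Nat.lt_or_ge n 2 with hn₂ | hn₂
  · obtain rfl : n = 1 := by omega
    simp
  obtain ⟨m, rfl⟩ := Nat.exists_eq_add_of_le' hn₂
  have hterm : ∀ k ∈ Icc 1 ((m + 2) / 2),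
      ((m + 2 : ℕ) : ℝ) * ((-1 : ℝ) ^ (k - 1) / k * ((m + 2 - k - 1).choose (k - 1) : ℝ) *
        (Nat.fib (2 * k) : ℝ)) =
      -((((m + 2 - k).choose k + (m + 2 - k - 1).choose (k - 1) : ℕ) : ℝ) * (-1) ^ k *
        Nat.fib (2 * k)) := fun k hk => by
    obtain ⟨hk₁, hk₂⟩ := mem_Icc.1 hk
    rw [← mul_assoc, cast_mul_neg_one_pow_div_mul_choose hk₁ (by omega), neg_mul]
  rw [mul_sum, sum_congr rfl hterm, sum_neg_distrib, sum_mul_neg_one_pow_mul_fib_two_mul,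
    sum_Icc_choose_add_choose_mul_pow, sum_Icc_choose_add_choose_mul_pow,
    fibSum_add_two_add_mul_fibSum_neg_sq goldenRatio_sq,
    fibSum_add_two_add_mul_fibSum_neg_sq goldenConj_sq, ← goldenRatio_pow_mul_coeffMod5_sub]
  ring
end

section
/- For every positive integer n and integer t, ∑_{k=0}^{⌊n/2⌋} (-1)^k·C(n-k, k)·L_{n-2k+t} equals (-1)^{⌊(n+1)/5⌋}·L_t if n ≡ 0 or 3 (mod 5); equals (-1)^{⌊(n+1)/5⌋}·L_{t+1} if n ≡ 1 or 2 (mod 5); and equals 0 if n ≡ 4 (mod 5). -/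
/-!
Call the sum `S n t`; it makes sense with `lucasZ` replaced by any sequence `a` satisfying
`a (t + 2) = a (t + 1) + a t`. Written over the antidiagonal `k + j = n`, Pascal's rule shows that
it satisfies `S (n + 2) t = S (n + 1) (t + 1) - S n t`. The right-hand side obeys the same
recurrence: checking the five residues of `n` mod 5, each step is one instance of the recurrence of
`a`, with the sign flipping when `n + 1` passes a multiple of 5. Both sides agree for `n = 0, 1`.
-/

open Finset Real

lemma lucasZ_natCast (m : ℕ) : lucasZ m = lucasNat m := by
  simp [lucasZ]

lemma lucasZ_neg_natCast (m : ℕ) : lucasZ (-m) = (-1) ^ m * lucasNat m := by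
  rcases m with _ | m
  · simp [lucasZ]
  · rw [lucasZ, if_neg (by omega), neg_neg, Int.toNat_natCast]

lemma lucasZ_add_two (t : ℤ) : lucasZ (t + 2) = lucasZ (t + 1) + lucasZ t := by
  obtain ⟨m, rfl | rfl⟩ := Int.eq_nat_or_neg t
  · have h : lucasNat (m + 2) = lucasNat (m + 1) + lucasNat m := rfl
    simp only [← lucasZ_natCast] at h
    exact_mod_cast h
  · match m with
    | 0 => decide
    | 1 => decide
    | 2 => decide
    | m + 3 =>
      have h : lucasNat (m + 3) = lucasNat (m + 2) + lucasNat (m + 1) := rfl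
      rw [show -((m + 3 : ℕ) : ℤ) + 2 = -((m + 1 : ℕ) : ℤ) by push_cast; ring,
        show -((m + 3 : ℕ) : ℤ) + 1 = -((m + 2 : ℕ) : ℤ) by push_cast; ring]
      simp only [lucasZ_neg_natCast, h, pow_succ]
      ring

variable {R : Type*} [CommRing R]

-- Over the antidiagonal `(k, n - k)` Pascal's rule applies termwise, with no truncated subtraction.
def altChooseSum (a : ℤ → R) (n : ℕ) (t : ℤ) : R :=
  ∑ p ∈ antidiagonal n, (-1) ^ p.1 * (p.2.choose p.1 : R) * a (p.2 - p.1 + t)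

lemma altChooseSum_add_two (a : ℤ → R) (n : ℕ) (t : ℤ) :
    altChooseSum a (n + 2) t = altChooseSum a (n + 1) (t + 1) - altChooseSum a n t := by
  have pascal (k j : ℕ) :
      (-1) ^ (k + 1) * ((j + 1).choose (k + 1) : R) * a ((j + 1 : ℕ) - (k + 1 : ℕ) + t) =
        (-1) ^ (k + 1) * (j.choose (k + 1) : R) * a (j - (k + 1 : ℕ) + (t + 1)) -
          (-1) ^ k * (j.choose k : R) * a (j - k + t) := by
    rw [show ((j + 1 : ℕ) : ℤ) - (k + 1 : ℕ) + t = j - k + t by push_cast; ring,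
      show (j : ℤ) - (k + 1 : ℕ) + (t + 1) = j - k + t by push_cast; ring, Nat.choose_succ_succ]
    push_cast
    ring
  have top : ((n + 1 + 1 : ℕ) : ℤ) - (0 : ℕ) + t = (n + 1 : ℕ) - (0 : ℕ) + (t + 1) := by
    push_cast; ring
  rw [altChooseSum, Nat.sum_antidiagonal_succ, Nat.sum_antidiagonal_succ', altChooseSum,
    Nat.sum_antidiagonal_succ, altChooseSum, top]
  simp only [pascal, sum_sub_distrib, Nat.choose_zero_right, Nat.choose_zero_succ, Nat.cast_zero,
    mul_zero, zero_mul, zero_add]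
  ring

lemma sum_range_half_eq_altChooseSum (a : ℤ → R) (n : ℕ) (t : ℤ) :
    ∑ k ∈ range (n / 2 + 1), (-1) ^ k * (Nat.choose (n - k) k : R) * a (n - 2 * k + t) =
      altChooseSum a n t := by
  rw [altChooseSum, Nat.sum_antidiagonal_eq_sum_range_succ_mk]
  calc _ = ∑ k ∈ range (n + 1), (-1) ^ k * (Nat.choose (n - k) k : R) * a (n - 2 * k + t) := by
        refine sum_subset (range_subset_range.2 (by omega)) fun k _ hk => ?_
        rw [Nat.choose_eq_zero_of_lt (by simp only [mem_range] at hk; omega)]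
        simp
    _ = _ := sum_congr rfl fun k hk => by
        rw [Nat.cast_sub (by simp only [mem_range] at hk; omega)]
        congr 2
        ring

def altChooseSumClosed (a : ℤ → R) (n : ℕ) (t : ℤ) : R :=
  if n % 5 = 0 ∨ n % 5 = 3 then (-1) ^ ((n + 1) / 5) * a t
  else if n % 5 = 1 ∨ n % 5 = 2 then (-1) ^ ((n + 1) / 5) * a (t + 1)
  else 0

lemma altChooseSumClosed_add_two {a : ℤ → R} (ha : ∀ t, a (t + 2) = a (t + 1) + a t)
    (n : ℕ) (t : ℤ) :
    altChooseSumClosed a (n + 2) t =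
      altChooseSumClosed a (n + 1) (t + 1) - altChooseSumClosed a n t := by
  have h1 : (n + 1 + 1) / 5 = (n + 1) / 5 ∨ (n + 1 + 1) / 5 = (n + 1) / 5 + 1 := by omega
  have h2 : (n + 2 + 1) / 5 = (n + 1) / 5 ∨ (n + 2 + 1) / 5 = (n + 1) / 5 + 1 := by omega
  have hs : t + 1 + 1 = t + 2 := by ring
  simp only [altChooseSumClosed]
  split_ifs <;> rcases h1 with h1 | h1 <;> rcases h2 with h2 | h2 <;>
    first | omega | (simp only [h1, h2, hs, ha, pow_succ]; ring)

lemma altChooseSum_eq_closed {a : ℤ → R} (ha : ∀ t, a (t + 2) = a (t + 1) + a t)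
    (n : ℕ) (t : ℤ) :
    altChooseSum a n t = altChooseSumClosed a n t := by
  induction n using Nat.twoStepInduction generalizing t with
  | zero => simp [altChooseSum, altChooseSumClosed]
  | one => simp [altChooseSum, altChooseSumClosed, Nat.antidiagonal_succ, add_comm]
  | more n ih₀ ih₁ => rw [altChooseSum_add_two, altChooseSumClosed_add_two ha, ih₀, ih₁]

theorem stmt6_general (n : ℕ) (t : ℤ) :
    ∑ k ∈ Finset.range (n / 2 + 1),
        (-1 : ℤ) ^ k * (Nat.choose (n - k) k : ℤ) * lucasZ ((n : ℤ) - 2 * k + t) =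
      if n % 5 = 0 ∨ n % 5 = 3 then (-1) ^ ((n + 1) / 5) * lucasZ t
      else if n % 5 = 1 ∨ n % 5 = 2 then (-1) ^ ((n + 1) / 5) * lucasZ (t + 1)
      else 0 := by
  rw [sum_range_half_eq_altChooseSum, altChooseSum_eq_closed lucasZ_add_two]
  rfl

theorem stmt6 (n : ℕ) (hn : 0 < n) (t : ℤ) :
    ∑ k ∈ Finset.range (n / 2 + 1),
        (-1 : ℤ) ^ k * (Nat.choose (n - k) k : ℤ) * lucasZ ((n : ℤ) - 2 * k + t) =
      if n % 5 = 0 ∨ n % 5 = 3 then (-1) ^ ((n + 1) / 5) * lucasZ t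
      else if n % 5 = 1 ∨ n % 5 = 2 then (-1) ^ ((n + 1) / 5) * lucasZ (t + 1)
      else 0 :=
  stmt6_general n t
end

section
/- For every positive integer n and integer t, ∑_{k=0}^{⌊n/2⌋} (-1)^k·C(n-k, k)·F_{n-2k+t} equals (-1)^{⌊(n+1)/5⌋}·F_t if n ≡ 0 or 3 (mod 5); equals (-1)^{⌊n/5⌋}·F_{t+1} if n ≡ 1 or 2 (mod 5); and equals 0 if n ≡ 4 (mod 5). -/
open Finset Real

/-!
Writing `E` for the shift `t ↦ t + 1`, Pascal's rule gives the Chebyshev-type recurrence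
`S (n + 2) = E (S (n + 1)) - S n` for the left-hand side, with `S 0 = F_t` and `S 1 = F_{t+1}`.
On Fibonacci-like sequences `E² = E + 1`, so the right-hand side satisfies the same recurrence:
it changes sign when `n` grows by `5`, so the recurrence only has to be checked for `n < 5`.
-/

lemma fibZ_natCast (k : ℕ) : fibZ k = Nat.fib k := by
  simp [fibZ]

lemma fibZ_neg_natCast (k : ℕ) : fibZ (-k) = (-1) ^ (k + 1) * Nat.fib k := by
  rcases k with _ | k
  · simp [fibZ]
  · rw [fibZ, if_neg (by omega)]
    simp

lemma fibZ_add_two (m : ℤ) : fibZ (m + 2) = fibZ (m + 1) + fibZ m := by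
  obtain ⟨k, rfl | rfl⟩ := Int.eq_nat_or_neg m
  · rw [show (k : ℤ) + 2 = (k + 2 : ℕ) by push_cast; ring,
      show (k : ℤ) + 1 = (k + 1 : ℕ) by push_cast; ring,
      fibZ_natCast, fibZ_natCast, fibZ_natCast, Nat.fib_add_two]
    push_cast
    ring
  · rcases k with _ | _ | k
    · decide
    · decide
    · have h2 : -((k + 2 : ℕ) : ℤ) + 2 = -(k : ℤ) := by push_cast; ring
      have h1 : -((k + 2 : ℕ) : ℤ) + 1 = -((k + 1 : ℕ) : ℤ) := by push_cast; ring
      rw [h2, h1, fibZ_neg_natCast, fibZ_neg_natCast, fibZ_neg_natCast,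
        Nat.fib_add_two (n := k)]
      push_cast
      ring

def altChooseFibTerm (n : ℕ) (t : ℤ) (k : ℕ) : ℤ :=
  (-1) ^ k * (Nat.choose (n - k) k : ℤ) * fibZ ((n : ℤ) - 2 * k + t)

def altChooseFibSum (n : ℕ) (t : ℤ) : ℤ :=
  ∑ k ∈ range (n / 2 + 1), altChooseFibTerm n t k

def altChooseFibClosedForm (n : ℕ) (t : ℤ) : ℤ :=
  if n % 5 = 0 ∨ n % 5 = 3 then (-1) ^ ((n + 1) / 5) * fibZ t
  else if n % 5 = 1 ∨ n % 5 = 2 then (-1) ^ (n / 5) * fibZ (t + 1)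
  else 0

lemma altChooseFibTerm_eq_zero {n k : ℕ} (h : n / 2 < k) (t : ℤ) :
    altChooseFibTerm n t k = 0 := by
  simp [altChooseFibTerm, Nat.choose_eq_zero_of_lt (by omega : n - k < k)]

lemma altChooseFibSum_eq_sum_range {n N : ℕ} (hN : n / 2 + 1 ≤ N) (t : ℤ) :
    altChooseFibSum n t = ∑ k ∈ range N, altChooseFibTerm n t k := by
  refine sum_subset (range_subset_range.2 hN) fun k _ hk => altChooseFibTerm_eq_zero ?_ t
  simpa using hk

lemma altChooseFibTerm_succ_succ {n k : ℕ} (hk : k ≤ n) (t : ℤ) :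
    altChooseFibTerm (n + 2) t (k + 1) =
      altChooseFibTerm (n + 1) (t + 1) (k + 1) - altChooseFibTerm n t k := by
  have hpascal : (n + 2 - (k + 1)).choose (k + 1) = (n - k).choose k + (n - k).choose (k + 1) := by
    rw [show n + 2 - (k + 1) = n - k + 1 by omega, Nat.choose_succ_succ]
  simp only [altChooseFibTerm, hpascal, show n + 1 - (k + 1) = n - k by omega]
  push_cast
  ring_nf

lemma altChooseFibSum_add_two (n : ℕ) (t : ℤ) :
    altChooseFibSum (n + 2) t = altChooseFibSum (n + 1) (t + 1) - altChooseFibSum n t := by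
  have hzero : altChooseFibTerm (n + 2) t 0 = altChooseFibTerm (n + 1) (t + 1) 0 := by
    simp only [altChooseFibTerm, Nat.choose_zero_right]
    push_cast
    ring_nf
  rw [altChooseFibSum_eq_sum_range (n := n + 2) (N := n / 2 + 1 + 1) (by omega),
    altChooseFibSum_eq_sum_range (n := n + 1) (N := n / 2 + 1 + 1) (by omega), altChooseFibSum,
    sum_range_succ' (altChooseFibTerm (n + 2) t), sum_range_succ' (altChooseFibTerm (n + 1) _),
    sum_congr rfl fun k hk => altChooseFibTerm_succ_succ (by simp at hk; omega) t,
    sum_sub_distrib, hzero]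
  ring

lemma altChooseFibClosedForm_add_five (n : ℕ) (t : ℤ) :
    altChooseFibClosedForm (n + 5) t = -altChooseFibClosedForm n t := by
  simp only [altChooseFibClosedForm, Nat.add_mod_right,
    show (n + 5 + 1) / 5 = (n + 1) / 5 + 1 by omega, show (n + 5) / 5 = n / 5 + 1 by omega]
  split_ifs <;> ring

lemma altChooseFibClosedForm_add_two (n : ℕ) (t : ℤ) :
    altChooseFibClosedForm (n + 2) t =
      altChooseFibClosedForm (n + 1) (t + 1) - altChooseFibClosedForm n t := by
  induction n using Nat.strong_induction_on with
  | _ n ih =>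
    by_cases hn : n < 5
    · have : fibZ (t + 1 + 1) = fibZ (t + 1) + fibZ t := by
        rw [add_assoc, one_add_one_eq_two, fibZ_add_two]
      interval_cases n <;> simp [altChooseFibClosedForm] <;> linarith
    · obtain ⟨m, rfl⟩ : ∃ m, n = m + 5 := ⟨n - 5, by omega⟩
      rw [show m + 5 + 2 = m + 2 + 5 by ring, show m + 5 + 1 = m + 1 + 5 by ring,
        altChooseFibClosedForm_add_five, altChooseFibClosedForm_add_five,
        altChooseFibClosedForm_add_five, ih m (by omega)]
      ring

lemma altChooseFibSum_eq_closedForm (n : ℕ) (t : ℤ) :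
    altChooseFibSum n t = altChooseFibClosedForm n t := by
  induction n using Nat.strong_induction_on generalizing t with
  | _ n ih =>
    match n with
    | 0 => simp [altChooseFibSum, altChooseFibTerm, altChooseFibClosedForm]
    | 1 => simp [altChooseFibSum, altChooseFibTerm, altChooseFibClosedForm, add_comm]
    | m + 2 =>
      rw [altChooseFibSum_add_two, altChooseFibClosedForm_add_two, ih (m + 1) (by omega),
        ih m (by omega)]

theorem stmt7_general (n : ℕ) (t : ℤ) :
    ∑ k ∈ Finset.range (n / 2 + 1),
        (-1 : ℤ) ^ k * (Nat.choose (n - k) k : ℤ) * fibZ ((n : ℤ) - 2 * k + t) =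
      if n % 5 = 0 ∨ n % 5 = 3 then (-1) ^ ((n + 1) / 5) * fibZ t
      else if n % 5 = 1 ∨ n % 5 = 2 then (-1) ^ (n / 5) * fibZ (t + 1)
      else 0 :=
  altChooseFibSum_eq_closedForm n t

theorem stmt7 (n : ℕ) (hn : 0 < n) (t : ℤ) :
    ∑ k ∈ Finset.range (n / 2 + 1),
        (-1 : ℤ) ^ k * (Nat.choose (n - k) k : ℤ) * fibZ ((n : ℤ) - 2 * k + t) =
      if n % 5 = 0 ∨ n % 5 = 3 then (-1) ^ ((n + 1) / 5) * fibZ t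
      else if n % 5 = 1 ∨ n % 5 = 2 then (-1) ^ (n / 5) * fibZ (t + 1)
      else 0 :=
  stmt7_general n t
end

section
/- For every positive integer n, ∑_{k=0}^{⌊n/2⌋} (-1)^{n-k}·C(n-k, k)·F_{2k} equals (-1)^{⌊(n+1)/5⌋}·F_n if n ≡ 0 or 3 (mod 5); equals (-1)^{⌊(n+1)/5⌋+1}·F_{n-1} if n ≡ 1 or 2 (mod 5); and equals 0 if n ≡ 4 (mod 5). -/
open Finset Real

/-!
Put `T j n = ∑ k, (-1)^k C(n-k, k) F_{2k+j}`, so that the sum in the theorem is `(-1)^n T 0 n`.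
Pascal's rule gives `T j (n+2) = T j (n+1) - T (j+2) n`, and the Fibonacci recurrence gives
`T (j+2) = T j + T (j+1)`. Hence `(T 0, T 1)` obeys a coupled linear recurrence of order two in `n`.
The same recurrence holds for the period-5 patterns `F_n, F_{n-1}, -F_{n-1}, -F_n, 0` and
`F_{n+1}, F_n, -F_n, -F_{n+1}, 0` (indexed by `n % 5`): in each residue class this is the
Fibonacci recurrence again. The two pairs agree at `n = 0, 1`, so they are equal.
-/

section AltDiagonalSum

variable {R : Type*} [Ring R]

theorem neg_one_pow_eq_of_mod_two_eq {a b : ℕ} (h : a % 2 = b % 2) : (-1 : R) ^ a = (-1) ^ b :=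
  neg_one_pow_congr (by simp only [Nat.even_iff]; omega)

def altDiagonalSum (f : ℕ → R) (n : ℕ) : R :=
  ∑ k ∈ range (n / 2 + 1), (-1) ^ k * ((n - k).choose k : R) * f k

theorem altDiagonalSum_eq_sum_range (f : ℕ → R) {n m : ℕ} (hm : n / 2 < m) :
    altDiagonalSum f n = ∑ k ∈ range m, (-1) ^ k * ((n - k).choose k : R) * f k := by
  refine sum_subset (range_subset_range.mpr hm) fun k hkm hk => ?_
  rw [Nat.choose_eq_zero_of_lt (by simp only [mem_range] at hkm hk; omega)]
  simp

theorem Nat.choose_sub_succ (n j : ℕ) :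
    (n + 1 - j).choose (j + 1) = (n - j).choose j + (n - j).choose (j + 1) := by
  rcases le_or_gt j n with hj | hj
  · rw [show n + 1 - j = n - j + 1 by omega, Nat.choose_succ_succ']
  · rw [show n + 1 - j = 0 by omega, show n - j = 0 by omega,
      Nat.choose_eq_zero_of_lt (by omega : 0 < j + 1), Nat.choose_eq_zero_of_lt (by omega : 0 < j)]

theorem altDiagonalSum_add_two (f : ℕ → R) (n : ℕ) :
    altDiagonalSum f (n + 2) =
      altDiagonalSum f (n + 1) - altDiagonalSum (fun k => f (k + 1)) n := by
  rw [altDiagonalSum_eq_sum_range f (m := n + 3) (by omega),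
    altDiagonalSum_eq_sum_range f (m := n + 3) (by omega),
    altDiagonalSum_eq_sum_range _ (m := n + 2) (by omega), sum_range_succ',
    sum_range_succ' _ (n + 2)]
  simp only [Nat.reduceSubDiff, Nat.choose_sub_succ, Nat.cast_add, pow_succ, pow_zero,
    Nat.choose_zero_right]
  rw [sub_eq_add_neg, ← sum_neg_distrib, add_right_comm, ← sum_add_distrib]
  congr 1
  refine sum_congr rfl fun j _ => ?_
  noncomm_ring

theorem altDiagonalSum_add (f g : ℕ → R) (n : ℕ) :
    altDiagonalSum (fun k => f k + g k) n = altDiagonalSum f n + altDiagonalSum g n := by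
  simp only [altDiagonalSum, mul_add, sum_add_distrib]

end AltDiagonalSum

def fibDiagonalSum (j n : ℕ) : ℤ :=
  altDiagonalSum (fun k => (Nat.fib (2 * k + j) : ℤ)) n

theorem fibDiagonalSum_add_two_left (j n : ℕ) :
    fibDiagonalSum (j + 2) n = fibDiagonalSum j n + fibDiagonalSum (j + 1) n := by
  rw [fibDiagonalSum, fibDiagonalSum, fibDiagonalSum, ← altDiagonalSum_add]
  congr 1
  funext k
  exact_mod_cast Nat.fib_add_two

theorem fibDiagonalSum_add_two_right (j n : ℕ) :
    fibDiagonalSum j (n + 2) = fibDiagonalSum j (n + 1) - fibDiagonalSum (j + 2) n := by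
  rw [fibDiagonalSum, fibDiagonalSum, fibDiagonalSum, altDiagonalSum_add_two]
  congr 3
  funext k
  ring_nf

def evenClosed (n : ℕ) : ℤ :=
  match n % 5 with
  | 0 => Nat.fib n
  | 1 => Nat.fib (n + 1) - Nat.fib n
  | 2 => Nat.fib n - Nat.fib (n + 1)
  | 3 => -Nat.fib n
  | _ => 0

def oddClosed (n : ℕ) : ℤ :=
  match n % 5 with
  | 0 => Nat.fib (n + 1)
  | 1 => Nat.fib n
  | 2 => -Nat.fib n
  | 3 => -Nat.fib (n + 1)
  | _ => 0

theorem evenClosed_add_two (n : ℕ) :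
    evenClosed (n + 2) = evenClosed (n + 1) - evenClosed n - oddClosed n := by
  have h₀ : (Nat.fib (n + 2) : ℤ) = Nat.fib n + Nat.fib (n + 1) := by
    exact_mod_cast Nat.fib_add_two
  have h₁ : (Nat.fib (n + 3) : ℤ) = Nat.fib (n + 1) + Nat.fib (n + 2) := by
    exact_mod_cast Nat.fib_add_two
  have : n % 5 < 5 := Nat.mod_lt _ (by norm_num)
  interval_cases h : n % 5 <;>
    simp only [evenClosed, oddClosed, h, show (n + 1) % 5 = (n % 5 + 1) % 5 by omega,
      show (n + 2) % 5 = (n % 5 + 2) % 5 by omega] <;> linarith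

theorem oddClosed_add_two (n : ℕ) :
    oddClosed (n + 2) = oddClosed (n + 1) - evenClosed n - 2 * oddClosed n := by
  have h₀ : (Nat.fib (n + 2) : ℤ) = Nat.fib n + Nat.fib (n + 1) := by
    exact_mod_cast Nat.fib_add_two
  have h₁ : (Nat.fib (n + 3) : ℤ) = Nat.fib (n + 1) + Nat.fib (n + 2) := by
    exact_mod_cast Nat.fib_add_two
  have : n % 5 < 5 := Nat.mod_lt _ (by norm_num)
  interval_cases h : n % 5 <;>
    simp only [evenClosed, oddClosed, h, show (n + 1) % 5 = (n % 5 + 1) % 5 by omega,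
      show (n + 2) % 5 = (n % 5 + 2) % 5 by omega] <;> linarith

theorem fibDiagonalSum_eq_closed (n : ℕ) :
    fibDiagonalSum 0 n = evenClosed n ∧ fibDiagonalSum 1 n = oddClosed n := by
  induction n using Nat.twoStepInduction with
  | zero => decide
  | one => decide
  | more n ih₀ ih₁ =>
    simp only [fibDiagonalSum_add_two_right, fibDiagonalSum_add_two_left, evenClosed_add_two,
      oddClosed_add_two, ih₀.1, ih₀.2, ih₁.1, ih₁.2]
    constructor <;> ring

theorem sum_neg_one_pow_sub_mul_choose_mul_fib (n : ℕ) :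
    ∑ k ∈ range (n / 2 + 1),
        (-1 : ℤ) ^ (n - k) * ((n - k).choose k : ℤ) * (Nat.fib (2 * k) : ℤ) =
      (-1) ^ n * fibDiagonalSum 0 n := by
  rw [fibDiagonalSum, altDiagonalSum, mul_sum]
  refine sum_congr rfl fun k hk => ?_
  have hkn : k ≤ n := by simp only [mem_range] at hk; omega
  rw [neg_one_pow_eq_of_mod_two_eq (b := n + k) (by omega), pow_add, add_zero]
  ring

theorem neg_one_pow_mul_evenClosed (n : ℕ) :
    (-1) ^ n * evenClosed n =
      if n % 5 = 0 ∨ n % 5 = 3 then (-1) ^ ((n + 1) / 5) * (Nat.fib n : ℤ)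
      else if n % 5 = 1 ∨ n % 5 = 2 then (-1) ^ ((n + 1) / 5 + 1) * (Nat.fib (n - 1) : ℤ)
      else 0 := by
  have hfib (m : ℕ) : (Nat.fib (m + 2) : ℤ) - Nat.fib (m + 1) = Nat.fib m := by
    rw [Nat.fib_add_two, Nat.cast_add]; ring
  have : n % 5 < 5 := Nat.mod_lt _ (by norm_num)
  interval_cases h : n % 5 <;> simp only [evenClosed, h] <;> norm_num
  · exact Or.inl (neg_one_pow_eq_of_mod_two_eq (by omega))
  · obtain ⟨m, rfl⟩ : ∃ m, n = m + 1 := ⟨n - 1, by omega⟩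
    rw [Nat.add_sub_cancel, hfib,
      neg_one_pow_eq_of_mod_two_eq (b := (m + 1 + 1) / 5 + 1) (by omega)]
  · obtain ⟨m, rfl⟩ : ∃ m, n = m + 1 := ⟨n - 1, by omega⟩
    rw [Nat.add_sub_cancel, ← neg_sub, hfib, pow_succ _ ((m + 1 + 1) / 5),
      neg_one_pow_eq_of_mod_two_eq (b := (m + 1 + 1) / 5) (by omega)]
    ring
  · rw [neg_one_pow_eq_of_mod_two_eq (b := (n + 1) / 5 + 1) (by omega)]
    ring

theorem stmt8_general (n : ℕ) :
    ∑ k ∈ Finset.range (n / 2 + 1),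
        (-1 : ℤ) ^ (n - k) * (Nat.choose (n - k) k : ℤ) * (Nat.fib (2 * k) : ℤ) =
      if n % 5 = 0 ∨ n % 5 = 3 then (-1) ^ ((n + 1) / 5) * (Nat.fib n : ℤ)
      else if n % 5 = 1 ∨ n % 5 = 2 then (-1) ^ ((n + 1) / 5 + 1) * (Nat.fib (n - 1) : ℤ)
      else 0 := by
  rw [sum_neg_one_pow_sub_mul_choose_mul_fib, (fibDiagonalSum_eq_closed n).1,
    neg_one_pow_mul_evenClosed]

theorem stmt8 (n : ℕ) (hn : 0 < n) :
    ∑ k ∈ Finset.range (n / 2 + 1),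
        (-1 : ℤ) ^ (n - k) * (Nat.choose (n - k) k : ℤ) * (Nat.fib (2 * k) : ℤ) =
      if n % 5 = 0 ∨ n % 5 = 3 then (-1) ^ ((n + 1) / 5) * (Nat.fib n : ℤ)
      else if n % 5 = 1 ∨ n % 5 = 2 then (-1) ^ ((n + 1) / 5 + 1) * (Nat.fib (n - 1) : ℤ)
      else 0 :=
  stmt8_general n
end

section
/- For every positive integer n and integer t, ∑_{k=0}^{n} (-1)^{n-k}·(n/(n+k))·C(n+k, n-k)·L_{2k+t} equals L_t if n ≡ 0 (mod 5); equals L_{t-1}/2 if n ≡ 1 or 4 (mod 5); and equals -L_{t+1}/2 if n ≡ 2 or 3 (mod 5). -/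
open Finset Real

/-!
By Binet, `L (2k + t) = φ ^ t (φ²) ^ k + ψ ^ t (ψ²) ^ k`, so it suffices to evaluate
`P n x = ∑ₖ (-1) ^ (n - k) n / (n + k) C(n + k, n - k) x ^ k` at the two roots `x = r²` of
`r² = r + 1`. Since `2n / (n + k) C(n + k, 2k) = C(n + k, 2k) + C(n - 1 + k, 2k)`,
`P n x = (-1) ^ n (b n (-x) + b (n - 1) (-x)) / 2` with the Morgan–Voyce polynomials
`b m y = ∑ₖ C(m + k, 2k) y ^ k`, which satisfy `b (m + 2) = (y + 2) b (m + 1) - b m`.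
At `y = -r²` the coefficient `c = 1 - r` satisfies `c² = c + 1`, so the roots of
`u² - c u + 1` are primitive tenth roots of unity and `b (m + 5) = -b m`; the five cases are
read off from `b 0, …, b 5`.
-/

section MorganVoyce

variable {R : Type*}

def morganVoyce [CommSemiring R] (m : ℕ) (x : R) : R :=
  ∑ k ∈ range (m + 1), ((m + k).choose (2 * k) : R) * x ^ k

theorem morganVoyce_zero [CommSemiring R] (x : R) : morganVoyce 0 x = 1 := by
  simp [morganVoyce]

theorem morganVoyce_one [CommSemiring R] (x : R) : morganVoyce 1 x = 1 + x := by
  simp [morganVoyce, sum_range_succ]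

theorem morganVoyce_eq_sum_range [CommSemiring R] {m N : ℕ} (h : m < N) (x : R) :
    morganVoyce m x = ∑ k ∈ range N, ((m + k).choose (2 * k) : R) * x ^ k :=
  sum_subset (range_subset_range.2 h) fun k _ hk => by
    rw [Nat.choose_eq_zero_of_lt (by simp at hk; omega), Nat.cast_zero, zero_mul]

theorem Nat.choose_add_three_add_choose (m k : ℕ) :
    (m + k + 3).choose (2 * k + 2) + (m + k + 1).choose (2 * k + 2) =
      2 * (m + k + 2).choose (2 * k + 2) + (m + k + 1).choose (2 * k) := by
  have h3 : (m + k + 3).choose (2 * k + 2) =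
      (m + k + 2).choose (2 * k + 1) + (m + k + 2).choose (2 * k + 2) := Nat.choose_succ_succ _ _
  have h2 : (m + k + 2).choose (2 * k + 2) =
      (m + k + 1).choose (2 * k + 1) + (m + k + 1).choose (2 * k + 2) := Nat.choose_succ_succ _ _
  have h1 : (m + k + 2).choose (2 * k + 1) =
      (m + k + 1).choose (2 * k) + (m + k + 1).choose (2 * k + 1) := Nat.choose_succ_succ _ _
  omega

theorem morganVoyce_add_two [CommRing R] (m : ℕ) (x : R) :
    morganVoyce (m + 2) x = (x + 2) * morganVoyce (m + 1) x - morganVoyce m x := by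
  have shift : ∀ j N, j < N + 1 → morganVoyce j x =
      1 + ∑ k ∈ range N, ((j + k + 1).choose (2 * k + 2) : R) * x ^ (k + 1) := fun j N h => by
    rw [morganVoyce_eq_sum_range h, sum_range_succ', add_comm]
    simp [add_assoc, mul_add]
  have hx : x * morganVoyce (m + 1) x =
      ∑ k ∈ range (m + 2), ((m + k + 1).choose (2 * k) : R) * x ^ (k + 1) := by
    rw [morganVoyce, mul_sum]
    refine sum_congr rfl fun k _ => ?_
    rw [add_right_comm]; ring
  rw [eq_sub_iff_add_eq, add_mul, hx, shift (m + 2) (m + 2) (by omega),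
    shift (m + 1) (m + 2) (by omega), shift m (m + 2) (by omega)]
  have key : ∑ k ∈ range (m + 2), (((m + 2 + k + 1).choose (2 * k + 2) : R) * x ^ (k + 1) +
        ((m + k + 1).choose (2 * k + 2) : R) * x ^ (k + 1)) =
      ∑ k ∈ range (m + 2), (((m + k + 1).choose (2 * k) : R) * x ^ (k + 1) +
        2 * (((m + 1 + k + 1).choose (2 * k + 2) : R) * x ^ (k + 1))) := by
    refine sum_congr rfl fun k _ => ?_
    have h := Nat.choose_add_three_add_choose m k
    rw [show m + k + 3 = m + 2 + k + 1 by ring, show m + k + 2 = m + 1 + k + 1 by ring] at h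
    rw [← add_mul, ← mul_assoc, ← add_mul]
    exact_mod_cast congrArg (fun c : ℕ => (c : R) * x ^ (k + 1)) (h.trans (add_comm _ _))
  rw [sum_add_distrib, sum_add_distrib, ← mul_sum] at key
  linear_combination key

theorem morganVoyce_neg_sq_add_five [CommRing R] {r : R} (hr : r ^ 2 = r + 1) (m : ℕ) :
    morganVoyce (m + 5) (-r ^ 2) = -morganVoyce m (-r ^ 2) := by
  have hc : (-r ^ 2 + 2) ^ 2 = (-r ^ 2 + 2) + 1 := by linear_combination (r ^ 2 + r - 1) * hr
  rw [morganVoyce_add_two (m + 3), morganVoyce_add_two (m + 2), morganVoyce_add_two (m + 1),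
    morganVoyce_add_two m]
  set c := -r ^ 2 + 2
  set b₁ := morganVoyce (m + 1) (-r ^ 2)
  set b₀ := morganVoyce m (-r ^ 2)
  -- `c ^ 4 - 3 c ^ 2 + 1` and `c ^ 3 - 2 c - 1` are both multiples of `c ^ 2 - c - 1`
  linear_combination ((c ^ 2 + c - 1) * b₁ - (c + 1) * b₀) * hc

end MorganVoyce

section CharZero

variable {K : Type*} [Field K] [CharZero K]

theorem natCast_div_mul_choose_sub {n k : ℕ} (hn : 0 < n) (hk : k ≤ n) :
    (n : K) / (n + k) * ((n + k).choose (n - k) : K) =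
      (((n + k).choose (2 * k) : K) + ((n - 1 + k).choose (2 * k) : K)) / 2 := by
  obtain ⟨m, rfl⟩ : ∃ m, n = m + 1 := ⟨n - 1, by omega⟩
  rw [Nat.choose_symm_of_eq_add (show m + 1 + k = (m + 1 - k) + 2 * k by omega), Nat.add_sub_cancel]
  have h := Nat.choose_mul_succ_eq (m + k) (2 * k)
  rw [show m + k + 1 - 2 * k = m + 1 - k by omega, show m + k + 1 = m + 1 + k by ring] at h
  have h' : ((m + k).choose (2 * k) : K) * (m + 1 + k) =
      ((m + 1 + k).choose (2 * k) : K) * (m + 1 - k) := by exact_mod_cast h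
  have hnk : ((m + 1 + k : ℕ) : K) ≠ 0 := Nat.cast_ne_zero.2 (by omega)
  push_cast at hnk ⊢
  field_simp
  linear_combination -h'

theorem sum_neg_one_pow_mul_div_mul_choose_mul_neg_pow {n : ℕ} (hn : 0 < n) (x : K) :
    ∑ k ∈ range (n + 1), (-1 : K) ^ (n - k) * ((n : K) / ((n : K) + (k : K))) *
        ((n + k).choose (n - k) : K) * (-x) ^ k =
      (-1) ^ n * (morganVoyce n x + morganVoyce (n - 1) x) / 2 := by
  rw [morganVoyce, morganVoyce_eq_sum_range (N := n + 1) (by omega), ← sum_add_distrib, mul_sum,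
    sum_div]
  refine sum_congr rfl fun k hk => ?_
  have hk : k ≤ n := Nat.lt_succ_iff.1 (mem_range.1 hk)
  rw [mul_assoc _ _ ((n + k).choose (n - k) : K), natCast_div_mul_choose_sub hn hk, neg_pow x k,
    show (-1 : K) ^ n = (-1) ^ (n - k) * (-1) ^ k by rw [← pow_add, Nat.sub_add_cancel hk]]
  ring

theorem sum_mul_sq_pow_of_sq_eq_add_one {r : K} (hr : r ^ 2 = r + 1) {n : ℕ} (hn : 0 < n) :
    ∑ k ∈ range (n + 1), (-1 : K) ^ (n - k) * ((n : K) / ((n : K) + (k : K))) *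
        ((n + k).choose (n - k) : K) * (r ^ 2) ^ k =
      if n % 5 = 0 then 1 else if n % 5 = 1 ∨ n % 5 = 4 then r⁻¹ / 2 else -r / 2 := by
  set s : ℕ → K := fun m => morganVoyce m (-r ^ 2) with hs
  have hper : Function.Periodic (fun m => (-1 : K) ^ (m + 1) * (s (m + 1) + s m)) 5 := fun m => by
    simp only [hs, show m + 5 + 1 = m + 1 + 5 by ring, morganVoyce_neg_sq_add_five hr]
    ring
  have s0 : s 0 = 1 := morganVoyce_zero _
  have s1 : s 1 = -r := by
    rw [show s 1 = 1 + -r ^ 2 from morganVoyce_one _]; linear_combination -hr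
  have s2 : s 2 = 0 := by
    rw [show s 2 = (-r ^ 2 + 2) * s 1 - s 0 from morganVoyce_add_two 0 _, s1, s0]
    linear_combination (r + 1) * hr
  have s3 : s 3 = r := by
    rw [show s 3 = (-r ^ 2 + 2) * s 2 - s 1 from morganVoyce_add_two 1 _, s2, s1]; ring
  have s4 : s 4 = -1 := by
    rw [show s 4 = (-r ^ 2 + 2) * s 3 - s 2 from morganVoyce_add_two 2 _, s3, s2]
    linear_combination -(r + 1) * hr
  have s5 : s 5 = -1 := by rw [show s 5 = -s 0 from morganVoyce_neg_sq_add_five hr 0, s0]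
  have hinv : r⁻¹ = r - 1 := inv_eq_of_mul_eq_one_right (by linear_combination hr)
  obtain ⟨m, rfl⟩ : ∃ m, n = m + 1 := ⟨n - 1, by omega⟩
  rw [← neg_neg (r ^ 2), sum_neg_one_pow_mul_div_mul_choose_mul_neg_pow hn, Nat.add_sub_cancel,
    ← hper.map_mod_nat m, show (m + 1) % 5 = (m % 5 + 1) % 5 by omega, hinv]
  have hm : m % 5 < 5 := Nat.mod_lt _ (by norm_num)
  interval_cases m % 5 <;> simp [s0, s1, s2, s3, s4, s5] <;> ring

end CharZero

section Binet

variable {K : Type*} [Field K] {r s : K}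

theorem lucasNat_eq_pow_add_pow (hr : r ^ 2 = r + 1) (hrs : r + s = 1) (n : ℕ) :
    (lucasNat n : K) = r ^ n + s ^ n := by
  induction n using lucasNat.induct with
  | case1 => norm_num [lucasNat]
  | case2 => simp [lucasNat, hrs]
  | case3 n ih₁ ih₀ =>
    show (lucasNat (n + 2) : K) = r ^ (n + 2) + s ^ (n + 2)
    obtain rfl : s = 1 - r := by linear_combination hrs
    rw [lucasNat, Int.cast_add, ih₁, ih₀]
    linear_combination -r ^ n * hr - (1 - r) ^ n * hr

theorem lucasZ_eq_zpow_add_zpow (hr : r ^ 2 = r + 1) (hrs : r + s = 1) (m : ℤ) :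
    (lucasZ m : K) = r ^ m + s ^ m := by
  rcases le_or_gt 0 m with hm | hm
  · lift m to ℕ using hm
    simp [lucasZ, lucasNat_eq_pow_add_pow hr hrs]
  · have hr_inv : r⁻¹ = -s := inv_eq_of_mul_eq_one_right (by linear_combination hr - r * hrs)
    have hs_inv : s⁻¹ = -r := inv_eq_of_mul_eq_one_right (by linear_combination hr - r * hrs)
    obtain ⟨p, rfl⟩ : ∃ p : ℕ, m = -p := ⟨(-m).toNat, by omega⟩
    rw [lucasZ, if_neg hm.not_ge, neg_neg, Int.toNat_natCast, zpow_neg, zpow_neg, zpow_natCast,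
      zpow_natCast, ← inv_pow, ← inv_pow, hr_inv, hs_inv, neg_pow, neg_pow r]
    push_cast
    rw [lucasNat_eq_pow_add_pow hr hrs]
    ring

end Binet

open scoped goldenRatio

theorem stmt13 (n : ℕ) (hn : 0 < n) (t : ℤ) :
    ∑ k ∈ Finset.range (n + 1),
        (-1 : ℝ) ^ (n - k) * ((n : ℝ) / ((n : ℝ) + (k : ℝ))) * (Nat.choose (n + k) (n - k) : ℝ) *
          (lucasZ (2 * k + t) : ℝ) =
      if n % 5 = 0 then (lucasZ t : ℝ)
      else if n % 5 = 1 ∨ n % 5 = 4 then (lucasZ (t - 1) : ℝ) / 2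
      else -(lucasZ (t + 1) : ℝ) / 2 := by
  have hφ := lucasZ_eq_zpow_add_zpow goldenRatio_sq goldenRatio_add_goldenConj
  have binet (k : ℕ) :
      (lucasZ (2 * k + t) : ℝ) = (φ ^ 2) ^ k * φ ^ t + (ψ ^ 2) ^ k * ψ ^ t := by
    rw [hφ, zpow_add₀ goldenRatio_ne_zero, zpow_add₀ goldenConj_ne_zero, zpow_mul, zpow_mul]
    norm_cast
  simp only [binet, mul_add, sum_add_distrib, ← mul_assoc, ← sum_mul,
    sum_mul_sq_pow_of_sq_eq_add_one goldenRatio_sq hn,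
    sum_mul_sq_pow_of_sq_eq_add_one goldenConj_sq hn]
  split_ifs <;>
    simp only [hφ, zpow_sub_one₀ goldenRatio_ne_zero, zpow_sub_one₀ goldenConj_ne_zero,
      zpow_add_one₀ goldenRatio_ne_zero, zpow_add_one₀ goldenConj_ne_zero] <;> ring
end
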